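/- For every compactly supported continuous function φ : ℝ → ℝ, the pairing of the measure χ♭(R,·) with φ, namely G(R) := (1/2)·e^{R/2}·(φ(R) + φ(−R)) + ∫_{|u|<|R|} g(R,u)·φ(u) du, tends to 0 as R → −∞. -/

import Mathlib

/-
At `y = -16x²` the series gives `f y = ∑ (xⁿ/n!)²` and `|f' y| = (16x)⁻¹ ∑ (xⁿ/n!)(xⁿ⁺¹/(n+1)!)`.
The Poisson weights `xⁿ/n!` peak at `n = ⌊x⌋`, where Stirling's formula gives `xⁿ/n! ≤ eˣ/√x`;
since `∑ xⁿ/n! = eˣ`, both series are `O(e^{2x}/√x)`. For `|u| ≤ |R|/2` write `u² - R² = -16x²`;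
then `|R|/5 ≤ x ≤ |R|/4`, so `e^{R/2}` absorbs `e^{2x}` and `|g R u| ≤ 2/√|R|`. Once `φ` vanishes
outside `[-|R|/2, |R|/2]`, the atoms at `±R` contribute nothing and the integral is at most
`2‖φ‖₁/√|R|`.
-/

open MeasureTheory Filter

/-- The power series `f(y) = ∑ (−1)^n yⁿ / (16ⁿ (n!)²)`. -/
noncomputable def f (y : ℝ) : ℝ :=
  ∑' n : ℕ, (-1 : ℝ) ^ n * y ^ n / (16 ^ n * (Nat.factorial n : ℝ) ^ 2)

/-- The absolutely continuous part of the isothermal kernel `χ♭`: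
`g(R,u) = −(1/2)·sgn(R)·e^{R/2}·((1/2)·f(u² − R²) + 2R·f′(u² − R²))` for `|u| < |R|`,
and `0` otherwise. -/
noncomputable def g (R u : ℝ) : ℝ :=
  if |u| < |R| then
    -(1 / 2) * Real.sign R * Real.exp (R / 2) *
      ((1 / 2) * f (u ^ 2 - R ^ 2) + 2 * R * deriv f (u ^ 2 - R ^ 2))
  else 0

open Real

section

open Nat

theorem pow_div_factorial_le_floor {x : ℝ} (hx : 0 ≤ x) (n : ℕ) :
    x ^ n / n ! ≤ x ^ ⌊x⌋₊ / ⌊x⌋₊ ! := by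
  set m := ⌊x⌋₊
  rcases le_total m n with hmn | hnm
  · obtain ⟨k, rfl⟩ := Nat.exists_eq_add_of_le hmn
    have hk : x ^ k * m ! ≤ (m + k)! := calc
      x ^ k * m ! ≤ (m + 1 : ℝ) ^ k * m ! := by
        gcongr; exact (Nat.lt_floor_add_one x).le
      _ ≤ (m + k)! := by
        rw [mul_comm]; exact_mod_cast Nat.factorial_mul_pow_le_factorial
    rw [div_le_div_iff₀ (by positivity) (by positivity), pow_add, mul_assoc]
    gcongr
  · obtain ⟨k, hmk⟩ := Nat.exists_eq_add_of_le hnm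
    have hk : ((n + k)! : ℝ) ≤ x ^ k * n ! := calc
      ((n + k)! : ℝ) = n ! * ((n + 1).ascFactorial k : ℕ) := by
        exact_mod_cast (Nat.factorial_mul_ascFactorial n k).symm
      _ ≤ n ! * ((n + k : ℕ) : ℝ) ^ k := by
        gcongr; exact_mod_cast Nat.ascFactorial_le_pow_add n k
      _ ≤ x ^ k * n ! := by
        rw [mul_comm]; gcongr; rw [← hmk]; exact Nat.floor_le hx
    rw [hmk, div_le_div_iff₀ (by positivity) (by positivity), pow_add, mul_assoc]
    gcongr

theorem mul_div_pow_le_exp {x : ℝ} (hx : 0 ≤ x) {n : ℕ} (hn : n ≠ 0) :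
    (exp 1 * x / n) ^ n ≤ exp x := by
  have hn' : (0 : ℝ) < n := by positivity
  have key : x / n ≤ exp (x / n - 1) := by linarith [add_one_le_exp (x / n - 1)]
  calc (exp 1 * x / n) ^ n = exp 1 ^ n * (x / n) ^ n := by rw [← mul_pow, mul_div_assoc]
    _ ≤ exp 1 ^ n * exp (x / n - 1) ^ n := by gcongr
    _ = exp x := by
      rw [← mul_pow, ← exp_add, ← exp_nat_mul]; congr 1; field_simp; ring

theorem pow_div_factorial_le_exp_div_sqrt {x : ℝ} (hx : 1 ≤ x) (n : ℕ) :
    x ^ n / n ! ≤ exp x / √x := by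
  set m := ⌊x⌋₊
  have hm : m ≠ 0 := (Nat.floor_pos.mpr hx).ne'
  have hm1 : (1 : ℝ) ≤ m := by exact_mod_cast Nat.one_le_iff_ne_zero.mpr hm
  have hxm : x ≤ 2 * π * m := by
    nlinarith [Nat.lt_floor_add_one x, pi_gt_three]
  calc x ^ n / n ! ≤ x ^ m / m ! := pow_div_factorial_le_floor (by linarith) n
    _ ≤ x ^ m / (√(2 * π * m) * (m / exp 1) ^ m) := by
      gcongr
      exact Stirling.le_factorial_stirling m
    _ = (exp 1 * x / m) ^ m / √(2 * π * m) := by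
      rw [div_pow, div_pow, mul_pow]; field_simp
    _ ≤ exp x / √x := by
      gcongr
      exact mul_div_pow_le_exp (by linarith) hm

theorem hasSum_pow_div_factorial (x : ℝ) : HasSum (fun n ↦ x ^ n / n !) (exp x) :=
  Real.exp_eq_exp_ℝ ▸ NormedSpace.expSeries_div_hasSum_exp x

theorem hasDerivAt_tsum_mul_pow {𝕜 : Type*} [RCLike 𝕜] {a : ℕ → 𝕜}
    (ha : ∀ r : ℝ, 0 ≤ r → Summable fun n ↦ ‖a n‖ * n * r ^ (n - 1)) (y : 𝕜) :
    HasDerivAt (fun z ↦ ∑' n, a n * z ^ n) (∑' n, a n * n * y ^ (n - 1)) y := by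
  set r := ‖y‖ + 1
  refine hasDerivAt_tsum_of_isPreconnected (g := fun n z ↦ a n * z ^ n)
    (g' := fun n z ↦ a n * n * z ^ (n - 1)) (ha r (by positivity)) Metric.isOpen_ball
    (convex_ball (0 : 𝕜) r).isPreconnected (fun n z _ ↦ ?_) (fun n z hz ↦ ?_)
    (Metric.mem_ball_self (by positivity)) ?_ (show y ∈ Metric.ball (0 : 𝕜) r by simp [r])
  · simpa [mul_assoc] using (hasDerivAt_pow n z).const_mul (a n)
  · rw [mem_ball_zero_iff] at hz
    rw [norm_mul, norm_mul, norm_pow, RCLike.norm_natCast]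
    gcongr
  · refine (hasSum_single 0 fun n hn ↦ ?_).summable
    simp [zero_pow hn]

noncomputable def fCoeff (n : ℕ) : ℝ := (-1) ^ n / (16 ^ n * (n ! : ℝ) ^ 2)

theorem f_eq_tsum : f = fun y ↦ ∑' n, fCoeff n * y ^ n := by
  ext y
  exact tsum_congr fun n ↦ by rw [fCoeff]; ring

theorem summable_norm_fCoeff_mul_pow_pred (r : ℝ) (hr : 0 ≤ r) :
    Summable fun n ↦ ‖fCoeff n‖ * n * r ^ (n - 1) := by
  refine (summable_nat_add_iff 1).mp <| (Real.summable_pow_div_factorial r).of_nonneg_of_le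
    (fun m ↦ by positivity) fun m ↦ ?_
  have h16 : (1 : ℝ) ≤ 16 ^ (m + 1) := one_le_pow₀ (by norm_num)
  simp only [fCoeff, norm_div, norm_pow, norm_neg, norm_one, one_pow, Real.norm_eq_abs,
    Nat.add_sub_cancel, Nat.factorial_succ]
  rw [abs_of_pos (by positivity)]
  push_cast
  rw [div_eq_mul_one_div (r ^ m), mul_comm (r ^ m)]
  gcongr
  have hX : (1 : ℝ) ≤ (m + 1) * m ! := by
    have : (1 : ℝ) ≤ m ! := by exact_mod_cast m.factorial_pos
    nlinarith [m.cast_nonneg (α := ℝ)]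
  rw [div_mul_eq_mul_div, one_mul, div_le_div_iff₀ (by positivity) (by positivity)]
  nlinarith

theorem hasDerivAt_f (y : ℝ) : HasDerivAt f (∑' n, fCoeff n * n * y ^ (n - 1)) y :=
  f_eq_tsum ▸ hasDerivAt_tsum_mul_pow summable_norm_fCoeff_mul_pow_pred y

theorem norm_fCoeff_mul_pow (x : ℝ) (n : ℕ) :
    ‖fCoeff n * (-(16 * x ^ 2)) ^ n‖ = (x ^ n / n !) ^ 2 := by
  simp only [fCoeff, norm_mul, norm_div, norm_pow, norm_neg, norm_one, one_pow, Real.norm_eq_abs,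
    sq_abs, Nat.abs_cast, abs_of_pos (show (0 : ℝ) < 16 by norm_num)]
  field_simp
  ring

theorem norm_fCoeff_succ_mul_pow {x : ℝ} (hx : x ≠ 0) (m : ℕ) :
    ‖fCoeff (m + 1) * (m + 1 : ℕ) * (-(16 * x ^ 2)) ^ m‖
      = x ^ m / m ! * (x ^ (m + 1) / (m + 1)!) / (16 * x) := by
  simp only [fCoeff, norm_mul, norm_div, norm_pow, norm_neg, norm_one, one_pow, Real.norm_eq_abs,
    sq_abs, Nat.abs_cast, abs_of_pos (show (0 : ℝ) < 16 by norm_num), Nat.factorial_succ]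
  push_cast
  field_simp
  ring

theorem abs_f_neg_le {x : ℝ} (hx : 1 ≤ x) : |f (-(16 * x ^ 2))| ≤ exp x * (exp x / √x) := by
  rw [f_eq_tsum, ← Real.norm_eq_abs]
  refine tsum_of_norm_bounded ((hasSum_pow_div_factorial x).mul_right _) fun n ↦ ?_
  rw [norm_fCoeff_mul_pow, sq]
  exact mul_le_mul_of_nonneg_left (pow_div_factorial_le_exp_div_sqrt hx n) (by positivity)

theorem abs_deriv_f_neg_le {x : ℝ} (hx : 1 ≤ x) :
    |deriv f (-(16 * x ^ 2))| ≤ exp x * (exp x / √x) / (16 * x) := by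
  rw [(hasDerivAt_f _).deriv, ← Real.norm_eq_abs]
  refine tsum_of_norm_bounded
    (((hasSum_pow_div_factorial x).mul_right (exp x / √x)).div_const (16 * x)) fun n ↦ ?_
  cases n with
  | zero => simp only [CharP.cast_eq_zero, mul_zero, zero_mul, norm_zero]; positivity
  | succ m =>
    rw [Nat.add_sub_cancel, norm_fCoeff_succ_mul_pow (by positivity)]
    gcongr ?_ / _
    rw [mul_comm]
    exact mul_le_mul_of_nonneg_left (pow_div_factorial_le_exp_div_sqrt hx m) (by positivity)

theorem abs_g_le_of_sq_sub_sq_eq {R u x : ℝ} (hy : u ^ 2 - R ^ 2 = -(16 * x ^ 2)) (hx1 : 1 ≤ x)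
    (hx_le : 4 * x ≤ -R) (hx_ge : -R ≤ 5 * x) : |g R u| ≤ 2 / √(-R) := by
  have hR0 : R < 0 := by linarith
  have huR : |u| < |R| := sq_lt_sq.mp (by nlinarith)
  set E := exp x * (exp x / √x)
  have hE : exp (R / 2) * E = exp (R / 2 + 2 * x) / √x := by
    rw [exp_add, show 2 * x = x + x by ring, exp_add]; ring
  have hsqrt : √(-R) ≤ 3 * √x := calc
    √(-R) ≤ √(5 * x) := Real.sqrt_le_sqrt hx_ge
    _ = √5 * √x := Real.sqrt_mul (by norm_num) x
    _ ≤ 3 * √x := by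
      gcongr
      rw [Real.sqrt_le_left (by norm_num)]; norm_num
  calc |g R u|
      = 1 / 2 * exp (R / 2) * |1 / 2 * f (-(16 * x ^ 2)) + 2 * R * deriv f (-(16 * x ^ 2))| := by
        rw [g, if_pos huR, Real.sign_of_neg hR0, hy, abs_mul, abs_of_pos (by positivity)]
        norm_num
    _ ≤ 1 / 2 * exp (R / 2) * (1 / 2 * E + 2 * |R| * (E / (16 * x))) := by
        gcongr
        refine (abs_add_le _ _).trans ?_
        rw [abs_mul, abs_mul, abs_mul, abs_two, abs_of_pos one_half_pos]
        gcongr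
        · exact abs_f_neg_le hx1
        · exact abs_deriv_f_neg_le hx1
    _ = exp (R / 2) * E * (1 / 4 + -R / (16 * x)) := by
        rw [abs_of_neg hR0]; field_simp; ring
    _ ≤ 1 / √x * (1 / 4 + 5 / 16) := by
        rw [hE]
        refine mul_le_mul (div_le_div_of_nonneg_right ?_ (Real.sqrt_nonneg x)) ?_
          (add_nonneg (by norm_num) (div_nonneg (by linarith) (by positivity))) (by positivity)
        · rw [exp_le_one_iff]; linarith
        · rw [add_le_add_iff_left, div_le_div_iff₀ (by positivity) (by norm_num)]; linarith
    _ ≤ 2 / √(-R) := by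
        rw [div_mul_eq_mul_div, one_mul,
          div_le_div_iff₀ (by positivity) (Real.sqrt_pos.mpr (by linarith))]
        linarith [Real.sqrt_nonneg x]

theorem abs_g_le {R u : ℝ} (hR : R ≤ -8) (hu : |u| ≤ -R / 2) : |g R u| ≤ 2 / √(-R) := by
  have hR0 : R < 0 := by linarith
  have hu2 : u ^ 2 ≤ R ^ 2 / 4 := by nlinarith [sq_abs u, abs_nonneg u]
  set s := √(R ^ 2 - u ^ 2)
  have hs_le : s ≤ -R := calc
    s ≤ √(R ^ 2) := Real.sqrt_le_sqrt (by nlinarith)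
    _ = -R := by rw [Real.sqrt_sq_eq_abs, abs_of_neg hR0]
  have hs_ge : 4 / 5 * -R ≤ s := Real.le_sqrt_of_sq_le (by nlinarith)
  refine abs_g_le_of_sq_sub_sq_eq (x := s / 4) ?_ (by linarith) (by linarith) (by linarith)
  rw [div_pow, Real.sq_sqrt (by nlinarith)]
  ring

end

theorem norm_setIntegral_g_mul_le {φ : ℝ → ℝ} (hφ : Integrable φ) {M R : ℝ}
    (hφM : ∀ u, M ≤ |u| → φ u = 0) (hR : R ≤ -(2 * M + 8)) (s : Set ℝ) :
    ‖∫ u in s, g R u * φ u‖ ≤ 2 / √(-R) * ∫ u, ‖φ u‖ := by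
  have hbound (u : ℝ) : ‖g R u * φ u‖ ≤ 2 / √(-R) * ‖φ u‖ := by
    rcases le_or_gt M |u| with hu | hu
    · simp [hφM u hu]
    · rw [norm_mul]
      gcongr
      exact abs_g_le (by linarith [abs_nonneg u]) (by linarith)
  calc ‖∫ u in s, g R u * φ u‖ ≤ ∫ u in s, 2 / √(-R) * ‖φ u‖ :=
        norm_integral_le_of_norm_le (hφ.norm.const_mul _).integrableOn (ae_of_all _ hbound)
    _ ≤ ∫ u, 2 / √(-R) * ‖φ u‖ :=
        setIntegral_le_integral (hφ.norm.const_mul _) (ae_of_all _ fun u ↦ by positivity)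
    _ = 2 / √(-R) * ∫ u, ‖φ u‖ := integral_const_mul _ _

theorem tendsto_two_div_sqrt_neg_atBot : Tendsto (fun R : ℝ ↦ 2 / √(-R)) atBot (nhds 0) := by
  simpa [div_eq_mul_inv] using ((tendsto_inv_atTop_zero.comp
    (Real.tendsto_sqrt_atTop.comp tendsto_neg_atBot_atTop)).const_mul 2)

theorem stmt9 (φ : ℝ → ℝ) (hφ : Continuous φ) (hsupp : HasCompactSupport φ) :
    Tendsto (fun R : ℝ =>
        (1 / 2) * Real.exp (R / 2) * (φ R + φ (-R))
          + ∫ u in Set.Ioo (-|R|) |R|, g R u * φ u)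
      atBot (nhds 0) := by
  obtain ⟨M, hM0, hM⟩ := hsupp.exists_pos_le_norm
  have hlim := tendsto_two_div_sqrt_neg_atBot.mul_const (∫ u, ‖φ u‖)
  rw [zero_mul] at hlim
  refine squeeze_zero_norm' ?_ hlim
  filter_upwards [eventually_le_atBot (-(2 * M + 8))] with R hR
  have hMR : M ≤ |R| := by rw [abs_of_neg (by linarith)]; linarith
  rw [hM R hMR, hM (-R) (by rwa [norm_neg]), add_zero, mul_zero, zero_add]
  exact norm_setIntegral_g_mul_le (hφ.integrable_of_hasCompactSupport hsupp) hM hR _
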